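/- arXiv:1412.1242 — 2 statements merged into one kernel-verified Lean document; each statement's English description precedes it below -/
import Mathlib

section
/- Let δ=1/5000, let a:ℕ→(0,∞) be nondecreasing with a(n)→∞, let A∈ℬ with 0<m(A)<∞, and let α be a real number with 2−2δ<α<2+2δ. Let ρ∈(0,1/2) and suppose x∈X, an infinite set K⊂ℕ and integers (J_n)_{n∈K} satisfy: (i) for all sufficiently large n, (2−2δ)a(n)m(A) ≤ Σ_n(1_A)(x) ≤ (2+2δ)a(n)m(A); (ii) S_n(1_A)(x)/(α·a(n)) → m(A) as n→∞ along K; (iii) J_n ≤ n for all n∈K and J_n→∞ as n→∞ along K; (iv) liminf_{n→∞, n∈K} a(J_n)/a(n) ≥ ρ. Then liminf_{n→∞, n∈K} S_{J_n}(1_A)(x)/(α·a(J_n)) ≥ (1 − 4δ/ρ)·m(A). -/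
open MeasureTheory Filter Set
open scoped ENNReal Topology

noncomputable section

/-- One-sided Birkhoff sum `S_n(f)(x) = ∑_{k=0}^{n-1} f (T^k x)`. -/
def birkhoffS {X : Type*} (T : X → X) (f : X → ℝ) (n : ℕ) (x : X) : ℝ :=
  ∑ k ∈ Finset.range n, f (T^[k] x)

/-- Symmetric Birkhoff sum `Σ_n(f)(x) = ∑_{|k|<n} f (T^k x)`, where `T'` is the inverse
of the invertible transformation `T`. -/
def birkhoffSym {X : Type*} (T T' : X → X) (f : X → ℝ) (n : ℕ) (x : X) : ℝ :=
  ∑ k ∈ Finset.range n, f (T^[k] x) + ∑ k ∈ Finset.Icc 1 (n - 1), f (T'^[k] x)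

/-- The return sequence `a_n(A) = (1/m(A)²) ∑_{k=0}^{n-1} m (A ∩ T^{-k} A)`. -/
def aSeq {X : Type*} [MeasurableSpace X] (T : X → X) (m : MeasureTheory.Measure X)
    (A : Set X) (n : ℕ) : ℝ :=
  (∑ k ∈ Finset.range n, (m (A ∩ (T^[k]) ⁻¹' A)).toReal) / (m A).toReal ^ 2

/-- The two-sided return sequence `ā_n(A) = (1/m(A)²) ∑_{|k|≤n} m (A ∩ T^k A)`,
where `T'` is the inverse of `T` (so that `T^k A = (T'^k)⁻¹ A` for `k ≥ 0`). -/
def aSeqSym {X : Type*} [MeasurableSpace X] (T T' : X → X) (m : MeasureTheory.Measure X)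
    (A : Set X) (n : ℕ) : ℝ :=
  ((m A).toReal + ∑ k ∈ Finset.Icc 1 n,
      ((m (A ∩ (T'^[k]) ⁻¹' A)).toReal + (m (A ∩ (T^[k]) ⁻¹' A)).toReal)) /
    (m A).toReal ^ 2

/-- `T` is boundedly rationally ergodic (BRE): there are `A` of positive finite measure
and `M < ∞` with `S_n(1_A) ≤ M a_n(A)` a.e. on `A` for all `n ≥ 1`. -/
def BddRatErg {X : Type*} [MeasurableSpace X] (T : X → X)
    (m : MeasureTheory.Measure X) : Prop :=
  ∃ A : Set X, MeasurableSet A ∧ 0 < m A ∧ m A < ⊤ ∧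
    ∃ M : ℝ, ∀ n : ℕ, 1 ≤ n →
      ∀ᵐ x ∂(m.restrict A), birkhoffS T (A.indicator 1) n x ≤ M * aSeq T m A n

/-- `T` is two-sided boundedly rationally ergodic: there are `A` of positive finite measure
and `M < ∞` with `Σ_n(1_A) ≤ M ā_n(A)` a.e. on `A` for all `n ≥ 1`. -/
def TwoSidedBRE {X : Type*} [MeasurableSpace X] (T T' : X → X)
    (m : MeasureTheory.Measure X) : Prop :=
  ∃ A : Set X, MeasurableSet A ∧ 0 < m A ∧ m A < ⊤ ∧
    ∃ M : ℝ, ∀ n : ℕ, 1 ≤ n →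
      ∀ᵐ x ∂(m.restrict A), birkhoffSym T T' (A.indicator 1) n x ≤ M * aSeqSym T T' m A n

/-- `tailSup g n = sup_{N ≥ n} g N`. -/
def tailSup (g : ℕ → ℝ) (n : ℕ) : ℝ := sSup (g '' Set.Ici n)

/-! Since `1_A ≥ 0`, the backward sum `Σ_n - S_n` is nondecreasing in `n`, so for `J_n ≤ n`
`S_{J_n} ≥ Σ_{J_n} - Σ_n + S_n ≥ (2 - 2δ) a(J_n) m(A) - (2 + 2δ) a(n) m(A) + S_n`.
Dividing by `α a(J_n)` and using `S_n ≈ α a(n) m(A)` and `a(J_n)/a(n) ≳ ρ`, the liminf is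
at least `((2 - 2δ) - (2 + 2δ - α)/ρ) m(A)/α`, and this is `≥ (1 - 4δ/ρ) m(A)` because
`α > 2 - 2δ` and `ρ ≤ 1`. -/

section BackwardSum

variable {X : Type*} (T T' : X → X) {f : X → ℝ} (x : X)

theorem birkhoffSym_sub_birkhoffS (n : ℕ) :
    birkhoffSym T T' f n x - birkhoffS T f n x = ∑ k ∈ Finset.Icc 1 (n - 1), f (T'^[k] x) := by
  simp only [birkhoffSym, birkhoffS, add_sub_cancel_left]

theorem monotone_birkhoffSym_sub_birkhoffS (hf : 0 ≤ f) :
    Monotone fun n => birkhoffSym T T' f n x - birkhoffS T f n x := by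
  intro j n hjn
  simp only [birkhoffSym_sub_birkhoffS]
  exact Finset.sum_le_sum_of_subset_of_nonneg (Finset.Icc_subset_Icc_right (by omega))
    fun _ _ _ => hf _

theorem birkhoffS_le_birkhoffSym (hf : 0 ≤ f) (n : ℕ) :
    birkhoffS T f n x ≤ birkhoffSym T T' f n x := by
  rw [← sub_nonneg, birkhoffSym_sub_birkhoffS]
  exact Finset.sum_nonneg fun _ _ => hf _

theorem le_birkhoffS_of_birkhoffSym_bounds (hf : 0 ≤ f) {j n : ℕ} (hjn : j ≤ n) {L U : ℝ}
    (hj : L ≤ birkhoffSym T T' f j x) (hn : birkhoffSym T T' f n x ≤ U) :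
    L - U + birkhoffS T f n x ≤ birkhoffS T f j x := by
  linarith [monotone_birkhoffSym_sub_birkhoffS T T' x hf hjn]

theorem sub_div_le_birkhoffS_div_of_birkhoffSym_bounds (hf : 0 ≤ f) {j n : ℕ}
    (hjn : j ≤ n) {α p q cL cU μ : ℝ} (hα : 0 < α) (hp : 0 < p) (hq : 0 < q)
    (hj : cL * q * μ ≤ birkhoffSym T T' f j x) (hn : birkhoffSym T T' f n x ≤ cU * p * μ) :
    cL * μ / α - (cU * μ / α - birkhoffS T f n x / (α * p)) / (q / p) ≤
      birkhoffS T f j x / (α * q) := by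
  have hlhs : cL * μ / α - (cU * μ / α - birkhoffS T f n x / (α * p)) / (q / p) =
      (cL * q * μ - cU * p * μ + birkhoffS T f n x) / (α * q) := by
    field_simp
    ring
  rw [hlhs]
  exact div_le_div_of_nonneg_right (le_birkhoffS_of_birkhoffSym_bounds T T' x hf hjn hj hn)
    (mul_pos hα hq).le

theorem birkhoffS_div_le_of_birkhoffSym_le (hf : 0 ≤ f) {j : ℕ} {α q cU μ : ℝ}
    (hα : 0 < α) (hq : 0 < q) (hj : birkhoffSym T T' f j x ≤ cU * q * μ) :
    birkhoffS T f j x / (α * q) ≤ cU * μ / α := by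
  rw [div_le_div_iff₀ (mul_pos hα hq) hα]
  nlinarith [birkhoffS_le_birkhoffSym T T' x hf j]

end BackwardSum

theorem Filter.tendsto_min_of_le_liminf {ι : Type*} {F : Filter ι} {t : ι → ℝ} {ρ : ℝ}
    (hbdd : IsBoundedUnder (· ≥ ·) F t) (h : ρ ≤ liminf t F) :
    Tendsto (fun i => min (t i) ρ) F (𝓝 ρ) := by
  refine tendsto_order.2 ⟨fun r hr => ?_, fun r hr => ?_⟩
  · filter_upwards [eventually_lt_of_lt_liminf (hr.trans_le h) hbdd] with i hi
    exact lt_min hi hr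
  · exact Eventually.of_forall fun i => (min_le_right _ _).trans_lt hr

-- `min (t i) ρ` converges although `t` need not, and replacing `t i` by it only lowers the bound
theorem Filter.le_liminf_of_eventually_sub_div_le {ι : Type*} {F : Filter ι} [F.NeBot]
    {c t g : ι → ℝ} {c₀ ρ L : ℝ} (hc : Tendsto c F (𝓝 c₀)) (hc₀ : 0 < c₀)
    (ht : ρ ≤ liminf t F) (ht_bdd : IsBoundedUnder (· ≥ ·) F t) (hρ : 0 < ρ)
    (hg : ∀ᶠ i in F, L - c i / t i ≤ g i) (hg_bdd : IsBoundedUnder (· ≤ ·) F g) :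
    L - c₀ / ρ ≤ liminf g F := by
  have htmin := tendsto_min_of_le_liminf ht_bdd ht
  have hlim : Tendsto (fun i => L - c i / min (t i) ρ) F (𝓝 (L - c₀ / ρ)) :=
    tendsto_const_nhds.sub (hc.div htmin hρ.ne')
  rw [← hlim.liminf_eq]
  refine liminf_le_liminf ?_ hlim.isBoundedUnder_ge hg_bdd.isCoboundedUnder_ge
  filter_upwards [hg, hc.eventually (eventually_gt_nhds hc₀),
    htmin.eventually (eventually_gt_nhds hρ)] with i hgi hci hti
  refine le_trans ?_ hgi
  gcongr
  exact min_le_left _ _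

theorem one_sub_four_mul_div_mul_le {δ ρ α μ : ℝ} (hδ₀ : 0 ≤ δ) (hδ₁ : δ ≤ 1 / 2)
    (hρ₀ : 0 < ρ) (hρ₁ : ρ ≤ 1) (hα : 2 - 2 * δ ≤ α) (hμ : 0 ≤ μ) :
    (1 - 4 * δ / ρ) * μ ≤ (2 - 2 * δ) * μ / α - ((2 + 2 * δ) * μ / α - μ) / ρ := by
  have hα₀ : 0 < α := by linarith
  rw [← mul_le_mul_iff_right₀ (mul_pos hα₀ hρ₀)]
  field_simp
  nlinarith [mul_nonneg (mul_nonneg hδ₀ hμ) (by linarith : (0:ℝ) ≤ 1 - 2 * δ),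
    mul_nonneg (mul_nonneg hμ (by linarith : (0:ℝ) ≤ α - (2 - 2 * δ)))
      (by linarith : (0:ℝ) ≤ 1 - ρ + 4 * δ)]

theorem lower_bound_implies_upper_bound_general
    {X : Type*} [MeasurableSpace X] (m : Measure X)
    (T T' : X → X)
    (a : ℕ → ℝ) (hapos : ∀ n, 0 < a n)
    (A : Set X) (hApos : 0 < m A) (hAfin : m A < ⊤)
    (α : ℝ) (hα₁ : 2 - 2 / 5000 < α) (hα₂ : α < 2 + 2 / 5000)
    (ρ : ℝ) (hρ : ρ ∈ Set.Ioo (0 : ℝ) (1 / 2))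
    (x : X) (K : Set ℕ) (hKinf : K.Infinite) (J : ℕ → ℕ)
    (h1 : ∀ᶠ n in atTop,
      (2 - 2 / 5000) * a n * (m A).toReal ≤ birkhoffSym T T' (A.indicator 1) n x ∧
      birkhoffSym T T' (A.indicator 1) n x ≤ (2 + 2 / 5000) * a n * (m A).toReal)
    (h2 : Tendsto (fun n => birkhoffS T (A.indicator 1) n x / (α * a n))
      (atTop ⊓ Filter.principal K) (nhds (m A).toReal))
    (h3 : ∀ n ∈ K, J n ≤ n)
    (h3' : Tendsto J (atTop ⊓ Filter.principal K) atTop)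
    (h4 : ρ ≤ Filter.liminf (fun n => a (J n) / a n) (atTop ⊓ Filter.principal K)) :
    (1 - 4 * (1 / 5000) / ρ) * (m A).toReal ≤
      Filter.liminf (fun n => birkhoffS T (A.indicator 1) (J n) x / (α * a (J n)))
        (atTop ⊓ Filter.principal K) := by
  obtain ⟨hρ₀, hρ₁⟩ := hρ
  have : (atTop ⊓ Filter.principal K).NeBot :=
    frequently_iff_neBot.1 (Nat.frequently_atTop_iff_infinite.2 hKinf)
  have hμ : 0 < (m A).toReal := ENNReal.toReal_pos hApos.ne' hAfin.ne
  have hα₀ : 0 < α := by linarith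
  have hf : 0 ≤ A.indicator (1 : X → ℝ) := indicator_nonneg fun _ _ => zero_le_one
  set μ := (m A).toReal
  calc (1 - 4 * (1 / 5000) / ρ) * μ
      ≤ (2 - 2 / 5000) * μ / α - ((2 + 2 / 5000) * μ / α - μ) / ρ := by
        convert one_sub_four_mul_div_mul_le (δ := 1 / 5000) (α := α) (by norm_num) (by norm_num)
          hρ₀ (by linarith) (by linarith) hμ.le using 3 <;> ring
    _ ≤ _ := by
      refine le_liminf_of_eventually_sub_div_le (tendsto_const_nhds.sub h2) ?_ h4
        (isBoundedUnder_of ⟨0, fun n => (div_pos (hapos _) (hapos _)).le⟩) hρ₀ ?_ ?_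
      · rw [sub_pos, lt_div_iff₀ hα₀]
        nlinarith
      · filter_upwards [h3'.eventually h1, h1.filter_mono inf_le_left,
          mem_inf_of_right (mem_principal_self K)] with n hJ hn hnK
        exact sub_div_le_birkhoffS_div_of_birkhoffSym_bounds T T' x hf (h3 n hnK) hα₀
          (hapos n) (hapos (J n)) hJ.1 hn.2
      · exact isBoundedUnder_of_eventually_le (h3'.eventually h1 |>.mono fun n hJ =>
          birkhoffS_div_le_of_birkhoffSym_le T T' x hf hα₀ (hapos (J n)) hJ.2)

/-- **Lemma 2 (bound from below implies bound from above).** With `δ = 1/5000`,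
`a` nondecreasing with `a n → ∞`, `A` of positive finite measure, `2−2δ < α < 2+2δ`,
`ρ ∈ (0,1/2)`: if `x ∈ X`, an infinite `K ⊆ ℕ` and `(J_n)_{n∈K}` satisfy
(i) the two-sided Egorov bounds for `Σ_n(1_A)(x)` eventually, (ii)
`S_n(1_A)(x)/(α a(n)) → m(A)` along `K`, (iii) `J_n ≤ n` on `K` and `J_n → ∞` along `K`,
(iv) `liminf_{n∈K} a(J_n)/a(n) ≥ ρ`, then
`liminf_{n∈K} S_{J_n}(1_A)(x)/(α a(J_n)) ≥ (1 − 4δ/ρ) m(A)`. -/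
theorem lower_bound_implies_upper_bound
    {X : Type*} [MeasurableSpace X] (m : Measure X) [SigmaFinite m]
    (T T' : X → X) (hT'meas : Measurable T')
    (hinv₁ : Function.LeftInverse T' T) (hinv₂ : Function.RightInverse T' T)
    (hT : Ergodic T m) (hcons : Conservative T m) (hXinf : m Set.univ = ⊤)
    (a : ℕ → ℝ) (hamono : Monotone a) (hapos : ∀ n, 0 < a n)
    (hatop : Tendsto a atTop atTop)
    (A : Set X) (hA : MeasurableSet A) (hApos : 0 < m A) (hAfin : m A < ⊤)
    (α : ℝ) (hα₁ : 2 - 2 / 5000 < α) (hα₂ : α < 2 + 2 / 5000)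
    (ρ : ℝ) (hρ : ρ ∈ Set.Ioo (0 : ℝ) (1 / 2))
    (x : X) (K : Set ℕ) (hKinf : K.Infinite) (J : ℕ → ℕ)
    (h1 : ∀ᶠ n in atTop,
      (2 - 2 / 5000) * a n * (m A).toReal ≤ birkhoffSym T T' (A.indicator 1) n x ∧
      birkhoffSym T T' (A.indicator 1) n x ≤ (2 + 2 / 5000) * a n * (m A).toReal)
    (h2 : Tendsto (fun n => birkhoffS T (A.indicator 1) n x / (α * a n))
      (atTop ⊓ Filter.principal K) (nhds (m A).toReal))
    (h3 : ∀ n ∈ K, J n ≤ n)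
    (h3' : Tendsto J (atTop ⊓ Filter.principal K) atTop)
    (h4 : ρ ≤ Filter.liminf (fun n => a (J n) / a n) (atTop ⊓ Filter.principal K)) :
    (1 - 4 * (1 / 5000) / ρ) * (m A).toReal ≤
      Filter.liminf (fun n => birkhoffS T (A.indicator 1) (J n) x / (α * a (J n)))
        (atTop ⊓ Filter.principal K) :=
  lower_bound_implies_upper_bound_general m T T' a hapos A hApos hAfin α hα₁ hα₂ ρ hρ x K hKinf J h1
    h2 h3 h3' h4
end
end

section
/- In the admissibility setting (δ=1/5000, T BRE with β̄(T)−β̲(T)<δ, a(n)=a_n(T), α=α(T), sets A and B⊂A with m(B)>(3/4)m(A) and threshold N₀ satisfying the Egorov bounds), if (x,K) is an admissible pair, then limsup_{n→∞, n∈K} a(⌊8n/9⌋)/a(n) ≤ 0.94. -/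
open MeasureTheory Filter Set
open scoped ENNReal Topology

noncomputable section

/-!
For `n ∈ K` put `M = ⌊8n/9⌋`, `L = n - M` and `y = Tⁿ x ∈ B`. The backward orbit of `y` retraces
the forward orbit of `x`, so the stretch `[M, n)` of the orbit of `x` is counted in `Σ_n(1_A)(x)`
and in `Σ_{L+1}(1_A)(y)` but not in `Σ_M(1_A)(x)`. Feeding the Egorov bounds for `Σ` at `x` and
at `y` into this gives
`(2-2δ) (a(M) + a(L+1)) m(A) + S_n(1_A)(x) ≤ 2 (2+2δ) a(n) m(A) + 1`.
Along `K`, (A1) and (A5) give `S_n(1_A)(x) ≈ α a(n) m(A) ≥ (2-2δ) a(n) m(A)`. Covering `[0, n)` by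
nine windows of length `L`, each dominated by a symmetric sum `Σ_L(1_A)` at a visit to `B`, gives
`a(L) ≳ a(n)/12`, and `a(n) → ∞` absorbs the `+ 1`; together these force `a(M) ≤ 0.94 a(n)`.
-/

open Function

section BirkhoffSums

variable {X : Type*} {T T' : X → X} {f : X → ℝ}

theorem birkhoffS_add (T : X → X) (f : X → ℝ) (m n : ℕ) (x : X) :
    birkhoffS T f (m + n) x = birkhoffS T f m x + birkhoffS T f n (T^[m] x) :=
  birkhoffSum_add T f m n x

theorem birkhoffS_succ' (T : X → X) (f : X → ℝ) (n : ℕ) (x : X) :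
    birkhoffS T f (n + 1) x = f x + birkhoffS T f n (T x) :=
  birkhoffSum_succ' T f n x

theorem birkhoffS_nonneg (hf : 0 ≤ f) (n : ℕ) (x : X) : 0 ≤ birkhoffS T f n x :=
  Finset.sum_nonneg fun _ _ => hf _

theorem birkhoffS_mono (T : X → X) (hf : 0 ≤ f) (x : X) : Monotone fun n => birkhoffS T f n x :=
  fun _ _ h => Finset.sum_le_sum_of_subset_of_nonneg (Finset.range_subset_range.2 h)
    fun _ _ _ => hf _

theorem birkhoffSym_le_birkhoffSym {g : X → ℝ} (hfg : f ≤ g) (n : ℕ) (x : X) :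
    birkhoffSym T T' f n x ≤ birkhoffSym T T' g n x :=
  add_le_add (Finset.sum_le_sum fun _ _ => hfg _) (Finset.sum_le_sum fun _ _ => hfg _)

theorem birkhoffSym_eq (T T' : X → X) (f : X → ℝ) (n : ℕ) (x : X) :
    birkhoffSym T T' f n x = birkhoffS T f n x + birkhoffS T' f (n - 1) (T' x) := by
  unfold birkhoffSym birkhoffS
  congr 1
  simp_rw [← iterate_succ_apply, Nat.succ_eq_add_one]
  rw [Finset.range_eq_Ico, Finset.sum_Ico_add' (fun k => f (T'^[k] x)), zero_add,
    Finset.Ico_add_one_right_eq_Icc]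

theorem birkhoffS_leftInverse_iterate (hinv : LeftInverse T' T) (L : ℕ) (z : X) :
    birkhoffS T' f L (T' (T^[L] z)) = birkhoffS T f L z := by
  induction L with
  | zero => rfl
  | succ L ih =>
    rw [iterate_succ_apply', hinv, birkhoffS_succ', ih, add_comm]
    exact (birkhoffSum_succ T f L z).symm

theorem birkhoffSym_iterate (hinv : LeftInverse T' T) (L : ℕ) (z : X) :
    birkhoffSym T T' f (L + 1) (T^[L] z) = birkhoffS T f (L + 1) (T^[L] z) + birkhoffS T f L z := by
  rw [birkhoffSym_eq, Nat.add_sub_cancel, birkhoffS_leftInverse_iterate hinv]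

theorem birkhoffSym_add_birkhoffS_le (hf : 0 ≤ f) (M L : ℕ) (x : X) :
    birkhoffSym T T' f M x + birkhoffS T f L (T^[M] x) ≤ birkhoffSym T T' f (M + L) x := by
  rw [birkhoffSym_eq, birkhoffSym_eq, birkhoffS_add]
  have := birkhoffS_mono T' hf (T' x) (show M - 1 ≤ M + L - 1 by omega)
  linarith

theorem birkhoffSym_add_birkhoffSym_iterate_le (hinv : LeftInverse T' T) (hf : 0 ≤ f)
    {M L n : ℕ} (hM : 1 ≤ M) (hn : M + L = n) (x : X) :
    birkhoffSym T T' f M x + birkhoffSym T T' f (L + 1) (T^[n] x) + birkhoffS T f n x ≤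
      birkhoffSym T T' f n x + birkhoffSym T T' f n (T^[n] x) + f x := by
  obtain ⟨k, rfl⟩ : ∃ k, n = k + 1 := ⟨n - 1, by omega⟩
  have hfirst := birkhoffSym_add_birkhoffS_le (T := T) (T' := T') hf M L x
  have hlast := birkhoffSym_iterate (f := f) hinv L (T^[M] x)
  have hwhole := birkhoffSym_iterate (f := f) hinv k (T x)
  have hstep := birkhoffS_mono T hf (T^[k + 1] x) (show L + 1 ≤ k + 1 by omega)
  rw [← iterate_add_apply, add_comm L M, hn] at hlast
  rw [← iterate_succ_apply] at hwhole
  rw [hn] at hfirst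
  linarith [birkhoffS_succ' T f k x]

theorem add_birkhoffS_le_of_birkhoffSym_bounds (hinv : LeftInverse T' T) (hf : 0 ≤ f)
    {s : Set X} {N₀ : ℕ} {lo hi : ℕ → ℝ}
    (hbounds : ∀ n, N₀ ≤ n → ∀ w ∈ s,
      lo n ≤ birkhoffSym T T' f n w ∧ birkhoffSym T T' f n w ≤ hi n)
    {M L n : ℕ} (hM : 1 ≤ M) (hn : M + L = n) (hMN₀ : N₀ ≤ M) (hLN₀ : N₀ ≤ L + 1)
    {x : X} (hx : x ∈ s) (hy : T^[n] x ∈ s) :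
    lo M + lo (L + 1) + birkhoffS T f n x ≤ 2 * hi n + f x := by
  have hnN₀ : N₀ ≤ n := by omega
  linarith [birkhoffSym_add_birkhoffSym_iterate_le hinv hf hM hn x,
    (hbounds M hMN₀ x hx).1, (hbounds (L + 1) hLN₀ _ hy).1,
    (hbounds n hnN₀ x hx).2, (hbounds n hnN₀ _ hy).2]

theorem birkhoffS_le_birkhoffSym_iterate (hinv : LeftInverse T' T) (hf : 0 ≤ f) {j L : ℕ}
    (hj : j < L) (z : X) : birkhoffS T f L z ≤ birkhoffSym T T' f L (T^[j] z) := by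
  obtain ⟨k, rfl⟩ : ∃ k, L = j + k := ⟨L - j, by omega⟩
  rw [birkhoffSym_eq, birkhoffS_add, ← birkhoffS_leftInverse_iterate hinv j z]
  have hback := birkhoffS_mono T' hf (T' (T^[j] z)) (show j ≤ j + k - 1 by omega)
  have hfwd := birkhoffS_mono T hf (T^[j] z) (show k ≤ j + k by omega)
  linarith

theorem birkhoffS_le_of_birkhoffSym_le (hinv : LeftInverse T' T) (hf : 0 ≤ f) {s : Set X}
    (hfs : support f ⊆ s) {L : ℕ} {C : ℝ} (hC0 : 0 ≤ C)
    (hC : ∀ w ∈ s, birkhoffSym T T' f L w ≤ C) (z : X) : birkhoffS T f L z ≤ C := by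
  by_cases hvisit : ∃ j < L, T^[j] z ∈ s
  · obtain ⟨j, hj, hjs⟩ := hvisit
    exact (birkhoffS_le_birkhoffSym_iterate hinv hf hj z).trans (hC _ hjs)
  · push Not at hvisit
    have hzero : birkhoffS T f L z = 0 := Finset.sum_eq_zero fun j hj =>
      notMem_support.1 fun h => hvisit j (Finset.mem_range.1 hj) (hfs h)
    rw [hzero]
    exact hC0

theorem birkhoffS_mul_le_of_birkhoffSym_le (hinv : LeftInverse T' T) (hf : 0 ≤ f) {s : Set X}
    (hfs : support f ⊆ s) {L : ℕ} {C : ℝ} (hC0 : 0 ≤ C)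
    (hC : ∀ w ∈ s, birkhoffSym T T' f L w ≤ C) (t : ℕ) (z : X) :
    birkhoffS T f (t * L) z ≤ t * C := by
  induction t with
  | zero => simp [birkhoffS]
  | succ t ih =>
    rw [Nat.succ_mul, birkhoffS_add]
    push_cast
    linarith [birkhoffS_le_of_birkhoffSym_le hinv hf hfs hC0 hC (T^[t * L] z)]

theorem tendsto_birkhoffS_indicator_atTop {s : Set X} {x : X} (hs : {k | T^[k] x ∈ s}.Infinite) :
    Tendsto (fun n => birkhoffS T (s.indicator 1) n x) atTop atTop := by
  classical
  have hcount : ∀ n, birkhoffS T (s.indicator 1) n x = Nat.count (fun k => T^[k] x ∈ s) n := by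
    intro n
    simp [birkhoffS, Nat.count_eq_card_filter_range, Set.indicator_apply, Finset.sum_boole]
  simp_rw [hcount]
  exact tendsto_natCast_atTop_atTop.comp <| tendsto_atTop_atTop_of_monotone (Nat.count_monotone _)
    fun k => ⟨Nat.nth _ k, (Nat.count_nth_of_infinite hs k).ge⟩

end BirkhoffSums

theorem aSeq_nonneg {X : Type*} [MeasurableSpace X] (T : X → X) (m : Measure X) (A : Set X)
    (n : ℕ) : 0 ≤ aSeq T m A n :=
  div_nonneg (Finset.sum_nonneg fun _ _ => ENNReal.toReal_nonneg) (sq_nonneg _)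

theorem aSeq_mono {X : Type*} [MeasurableSpace X] (T : X → X) (m : Measure X) (A : Set X) :
    Monotone (aSeq T m A) := fun _ _ h =>
  div_le_div_of_nonneg_right (Finset.sum_le_sum_of_subset_of_nonneg
    (Finset.range_subset_range.2 h) fun _ _ _ => ENNReal.toReal_nonneg) (sq_nonneg _)

theorem eventually_pos_and_mul_le_of_tendsto_div {ι : Type*} {l : Filter ι} {u v : ι → ℝ}
    {c r : ℝ} (h : Tendsto (fun i => u i / v i) l (𝓝 c)) (hv : ∀ i, 0 ≤ v i) (hr : 0 < r)
    (hrc : r < c) : ∀ᶠ i in l, 0 < v i ∧ r * v i ≤ u i := by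
  filter_upwards [h.eventually (lt_mem_nhds hrc)] with i hi
  have hvi : 0 < v i := (hv i).lt_of_ne' fun h0 => by
    rw [h0, div_zero] at hi
    linarith
  exact ⟨hvi, ((lt_div_iff₀ hvi).1 hi).le⟩

theorem tendsto_atTop_of_tendsto_div {ι : Type*} {l : Filter ι} {u v : ι → ℝ} {c : ℝ}
    (h : Tendsto (fun i => u i / v i) l (𝓝 c)) (hc : 0 < c) (hu : Tendsto u l atTop) :
    Tendsto v l atTop := by
  refine (hu.atTop_mul_pos (inv_pos.2 hc) (h.inv₀ hc.ne')).congr' ?_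
  filter_upwards [hu.eventually_ne_atTop 0] with i hi
  rw [inv_div, mul_div_cancel₀ _ hi]

theorem eight_ninths_le_of_birkhoffSym_bounds {X : Type*} {T T' : X → X} {a : ℕ → ℝ}
    {A B : Set X} {α β b : ℝ} {N₀ n : ℕ} {x : X}
    (hinv : LeftInverse T' T) (hBA : B ⊆ A) (ha0 : ∀ k, 0 ≤ a k) (ha : Monotone a)
    (hβ : 0 < β) (hb : 3 / 4 * β < b) (hα : 2 - 2 / 5000 < α)
    (hbounds : ∀ k, N₀ ≤ k → ∀ w ∈ B,
      (2 - 2 / 5000) * a k * β ≤ birkhoffSym T T' (A.indicator 1) k w ∧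
        birkhoffSym T T' (A.indicator 1) k w ≤ (2 + 2 / 5000) * a k * β)
    (hx : x ∈ B) (hy : T^[n] x ∈ B) (hn : 9 * N₀ + 2 ≤ n)
    (hSB : (1 - 1 / 1000) * b * (α * a n) ≤ birkhoffS T (B.indicator 1) n x)
    (hSA : (1 - 1 / 1000) * (β / b) * birkhoffS T (B.indicator 1) n x ≤
      birkhoffS T (A.indicator 1) n x)
    (hbig : 100 ≤ a n * β) :
    a (8 * n / 9) ≤ 0.94 * a n := by
  set M := 8 * n / 9
  set L := n - M
  have hA0 : 0 ≤ A.indicator (1 : X → ℝ) := indicator_nonneg fun _ _ => zero_le_one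
  have hB0 : 0 ≤ B.indicator (1 : X → ℝ) := indicator_nonneg fun _ _ => zero_le_one
  have hsym := add_birkhoffS_le_of_birkhoffSym_bounds hinv hA0 hbounds (M := M) (L := L)
    (by omega) (by omega) (by omega) (by omega) hx hy
  have hwindow : birkhoffS T (B.indicator 1) n x ≤ 9 * ((2 + 2 / 5000) * a L * β) := by
    refine (birkhoffS_mono T hB0 x (show n ≤ 9 * L by omega)).trans ?_
    have := birkhoffS_mul_le_of_birkhoffSym_le hinv hB0 support_indicator_subset
      (by have := ha0 L; positivity)
      (fun w hw => (birkhoffSym_le_birkhoffSym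
        (fun y => indicator_le_indicator_of_subset hBA (fun _ => zero_le_one) y) L w).trans
        (hbounds L (by omega) w hw).2) 9 x
    exact_mod_cast this
  have hxA : A.indicator (1 : X → ℝ) x = 1 := indicator_of_mem (hBA hx) _
  have hb0 : 0 < b := by linarith
  have hu0 : 0 ≤ a n * β := by linarith
  have hαu : (2 - 2 / 5000) * (a n * β) ≤ α * (a n * β) :=
    mul_le_mul_of_nonneg_right hα.le hu0
  have hSA_ge : (1 - 1 / 1000) ^ 2 * (α * (a n * β)) ≤ birkhoffS T (A.indicator 1) n x := by
    refine le_trans (le_of_eq ?_) ((mul_le_mul_of_nonneg_left hSB (by positivity)).trans hSA)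
    field_simp
  have hSB_ge : (1 - 1 / 1000) * (3 / 4) * (α * (a n * β)) ≤ birkhoffS T (B.indicator 1) n x := by
    refine le_trans ?_ hSB
    have : 3 / 4 * β * (α * a n) ≤ b * (α * a n) :=
      mul_le_mul_of_nonneg_right hb.le (mul_nonneg (by linarith) (ha0 n))
    linarith
  have haL : a L * β ≤ a (L + 1) * β := mul_le_mul_of_nonneg_right (ha (Nat.le_succ L)) hβ.le
  have hMβ : a M * β ≤ 0.94 * a n * β := by linarith
  exact le_of_mul_le_mul_right hMβ hβ

theorem limsup_a_eight_ninths_general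
    {X : Type*} [MeasurableSpace X] (m : Measure X)
    (T T' : X → X)
    (hinv₁ : Function.LeftInverse T' T)
    -- `A₀` is a set witnessing bounded rational ergodicity, and `a n = a_n(T) = a_n(A₀)`
    (A₀ : Set X)
    (a : ℕ → ℝ) (ha : ∀ n, a n = aSeq T m A₀ n)
    -- the constants `α = α(T)`, `βu = β̄(T)`, `βl = β̲(T)`
    (α : ℝ)
    (hα₁ : 2 - 2 / 5000 < α)
    -- the sets `A` and `B ⊆ A` and the Egorov threshold `N₀`
    (A : Set X) (hAfin : m A < ⊤)
    (B : Set X) (hBsub : B ⊆ A)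
    (hB34 : 3 / 4 * (m A).toReal < (m B).toReal)
    (N₀ : ℕ)
    (hEgorov : ∀ n : ℕ, N₀ ≤ n → ∀ x ∈ B,
      ((2 - 2 / 5000) * (m A).toReal ≤
          tailSup (fun N => birkhoffS T (A.indicator 1) N x / a N) n ∧
        tailSup (fun N => birkhoffS T (A.indicator 1) N x / a N) n ≤
          (2 + 2 / 5000) * (m A).toReal) ∧
      ((2 - 2 / 5000) * a n * (m A).toReal ≤ birkhoffSym T T' (A.indicator 1) n x ∧
        birkhoffSym T T' (A.indicator 1) n x ≤ (2 + 2 / 5000) * a n * (m A).toReal))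
    -- `(x, K)` is an admissible pair
    (x : X) (hxB : x ∈ B)
    (hA1 : Tendsto
      (fun n => birkhoffS T (A.indicator 1) n x / birkhoffS T (B.indicator 1) n x)
      atTop (nhds ((m A).toReal / (m B).toReal)))
    (K : Set ℕ) (hKinf : K.Infinite)
    (hA4 : ∀ n ∈ K, T^[n] x ∈ B)
    (hA5 : Tendsto (fun n => birkhoffS T (B.indicator 1) n x / (α * a n))
      (atTop ⊓ Filter.principal K) (nhds (m B).toReal))
    :
    Filter.limsup (fun n => a (8 * n / 9) / a n) (atTop ⊓ Filter.principal K) ≤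
      (0.94 : ℝ) := by
  obtain rfl : a = aSeq T m A₀ := funext ha
  have hmBA : (m B).toReal ≤ (m A).toReal := ENNReal.toReal_mono hAfin.ne (measure_mono hBsub)
  have hmA : 0 < (m A).toReal := by linarith
  have hmB : 0 < (m B).toReal := by linarith
  have hα : 0 < α := by linarith
  have : (atTop ⊓ 𝓟 K).NeBot :=
    frequently_mem_iff_neBot.1 (Nat.frequently_atTop_iff_infinite.2 hKinf)
  have hSB := eventually_pos_and_mul_le_of_tendsto_div hA5
    (fun n => mul_nonneg hα.le (aSeq_nonneg T m A₀ n)) (r := (1 - 1 / 1000) * (m B).toReal)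
    (by positivity) (by linarith)
  have hSA := eventually_pos_and_mul_le_of_tendsto_div hA1
    (fun n => birkhoffS_nonneg (indicator_nonneg fun _ _ => zero_le_one) n x)
    (r := (1 - 1 / 1000) * ((m A).toReal / (m B).toReal)) (by positivity)
    (by linarith [div_pos hmA hmB])
  have hvisits : Tendsto (fun n => birkhoffS T (B.indicator 1) n x) (atTop ⊓ 𝓟 K) atTop :=
    (tendsto_birkhoffS_indicator_atTop (hKinf.mono hA4)).mono_left inf_le_left
  have hbig : ∀ᶠ n in atTop ⊓ 𝓟 K, 100 ≤ aSeq T m A₀ n * (m A).toReal :=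
    (((tendsto_atTop_of_tendsto_div hA5 hmB hvisits).atTop_of_const_mul₀ hα).atTop_mul_const
      hmA).eventually_ge_atTop 100
  refine limsup_le_of_le (isCoboundedUnder_le_of_eventually_le _
    (Eventually.of_forall fun n => div_nonneg (aSeq_nonneg T m A₀ _) (aSeq_nonneg T m A₀ n))) ?_
  filter_upwards [hSB, hSA.filter_mono inf_le_left, hbig, mem_inf_of_right (mem_principal_self K),
    (eventually_ge_atTop (9 * N₀ + 2)).filter_mono inf_le_left]
    with n ⟨hαa, hSBn⟩ ⟨_, hSAn⟩ hbign hnK hn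
  rw [div_le_iff₀ (pos_of_mul_pos_right hαa hα.le)]
  exact eight_ninths_le_of_birkhoffSym_bounds hinv₁ hBsub (aSeq_nonneg T m A₀) (aSeq_mono T m A₀)
    hmA hB34 hα₁
    (fun k hk w hw => (hEgorov k hk w hw).2) hxB (hA4 n hnK) hn hSBn hSAn hbign

/-- **Lemma 4.** In the admissibility setting, for an admissible pair `(x, K)`:
`limsup_{n∈K} a(⌊8n/9⌋)/a(n) ≤ 0.94`. -/
theorem limsup_a_eight_ninths
    {X : Type*} [MeasurableSpace X] (m : Measure X) [SigmaFinite m]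
    (T T' : X → X) (hT'meas : Measurable T')
    (hinv₁ : Function.LeftInverse T' T) (hinv₂ : Function.RightInverse T' T)
    (hT : Ergodic T m) (hcons : Conservative T m) (hXinf : m Set.univ = ⊤)
    -- `A₀` is a set witnessing bounded rational ergodicity, and `a n = a_n(T) = a_n(A₀)`
    (A₀ : Set X) (hA₀ : MeasurableSet A₀) (hA₀pos : 0 < m A₀) (hA₀fin : m A₀ < ⊤)
    (M : ℝ)
    (hBRE : ∀ n : ℕ, 1 ≤ n → ∀ᵐ x ∂(m.restrict A₀),
      birkhoffS T (A₀.indicator 1) n x ≤ M * aSeq T m A₀ n)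
    (a : ℕ → ℝ) (ha : ∀ n, a n = aSeq T m A₀ n)
    -- the constants `α = α(T)`, `βu = β̄(T)`, `βl = β̲(T)`
    (α βu βl : ℝ)
    (hα : ∀ f : X → ℝ, Integrable f m → (∀ x, 0 ≤ f x) →
      ∀ᵐ x ∂m,
        Filter.limsup (fun n => ENNReal.ofReal (birkhoffS T f n x / a n)) atTop
          = ENNReal.ofReal (α * ∫ x, f x ∂m))
    (hβu : ∀ f : X → ℝ, Integrable f m → (∀ x, 0 ≤ f x) →
      ∀ᵐ x ∂m,
        Filter.limsup (fun n => ENNReal.ofReal (birkhoffSym T T' f n x / (2 * a n))) atTop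
          = ENNReal.ofReal (βu * ∫ x, f x ∂m))
    (hβl : ∀ f : X → ℝ, Integrable f m → (∀ x, 0 ≤ f x) →
      ∀ᵐ x ∂m,
        Filter.liminf (fun n => ENNReal.ofReal (birkhoffSym T T' f n x / (2 * a n))) atTop
          = ENNReal.ofReal (βl * ∫ x, f x ∂m))
    (hgap : βu - βl < 1 / 5000)
    (hα₁ : 2 - 2 / 5000 < α) (hα₂ : α < 2 + 2 / 5000)
    -- the sets `A` and `B ⊆ A` and the Egorov threshold `N₀`
    (A : Set X) (hA : MeasurableSet A) (hApos : 0 < m A) (hAfin : m A < ⊤)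
    (B : Set X) (hB : MeasurableSet B) (hBpos : 0 < m B) (hBsub : B ⊆ A)
    (hB34 : 3 / 4 * (m A).toReal < (m B).toReal)
    (N₀ : ℕ)
    (hEgorov : ∀ n : ℕ, N₀ ≤ n → ∀ x ∈ B,
      ((2 - 2 / 5000) * (m A).toReal ≤
          tailSup (fun N => birkhoffS T (A.indicator 1) N x / a N) n ∧
        tailSup (fun N => birkhoffS T (A.indicator 1) N x / a N) n ≤
          (2 + 2 / 5000) * (m A).toReal) ∧
      ((2 - 2 / 5000) * a n * (m A).toReal ≤ birkhoffSym T T' (A.indicator 1) n x ∧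
        birkhoffSym T T' (A.indicator 1) n x ≤ (2 + 2 / 5000) * a n * (m A).toReal))
    -- `(x, K)` is an admissible pair
    (x : X) (hxB : x ∈ B)
    (hA1 : Tendsto
      (fun n => birkhoffS T (A.indicator 1) n x / birkhoffS T (B.indicator 1) n x)
      atTop (nhds ((m A).toReal / (m B).toReal)))
    (hA2 : ∀ n : ℕ, N₀ ≤ n →
      (1 - 1 / 5000) * (2 * a n) * (m B).toReal < birkhoffSym T T' (B.indicator 1) n x ∧
      birkhoffSym T T' (B.indicator 1) n x < (1 + 1 / 5000) * (2 * a n) * (m B).toReal)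
    (hA3 : Tendsto
      (fun n => tailSup (fun N => birkhoffS T (B.indicator 1) N x / (α * a N)) n)
      atTop (nhds (m B).toReal))
    (K : Set ℕ) (hKinf : K.Infinite)
    (hA4 : ∀ n ∈ K, T^[n] x ∈ B)
    (hA5 : Tendsto (fun n => birkhoffS T (B.indicator 1) n x / (α * a n))
      (atTop ⊓ Filter.principal K) (nhds (m B).toReal))
    :
    Filter.limsup (fun n => a (8 * n / 9) / a n) (atTop ⊓ Filter.principal K) ≤
      (0.94 : ℝ) :=
  limsup_a_eight_ninths_general m T T' hinv₁ A₀ a ha α hα₁ A hAfin B hBsub hB34 N₀ hEgorov x hxB hA1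
    K hKinf hA4 hA5
end
end
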